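/- Let p(z) = z^s (a₀ + ∑_{v=μ}^{n−s} a_v z^v), 1 ≤ μ ≤ n−s, 0 ≤ s ≤ n−1, be a polynomial of degree n all of whose zeros other than the zero at the origin satisfy |z| ≥ k, where k ≥ 1. Then for α ∈ ℂ with |α| ≥ 1, max_{|z|=1} |D_α p(z)| ≤ [(|α|(n + s·k^μ) + (n−s)k^μ)/(1+k^μ)] · max_{|z|=1} |p(z)| − [(|α|−1)(n−s)/(k^s(1+k^μ))] · min_{|z|=k} |p(z)|. -/

import Mathlib

/-!
Write `D₀ f := N f - z f'` (that is, `polarDeriv N 0 f`), so that `D_α p = α p' + D₀ p`.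
Laguerre's inequality `k |f'(z)| ≤ |D₀ f(z)|` holds for `|z| ≤ k` when `f` has degree `≤ N` and no
zero in `|z| < k`: with `u_w = 1 / (z - w)` over the roots `w`, `f'/f = ∑ u_w`, every `u_w` lies in
the convex set `{u | k |u| ≤ |1 - z u|}`, hence so does the mean `(1/N) ∑ u_w`.
On the unit circle this yields two estimates.
* Applied with `k = 1` to `p - λ`, `|λ| > max |p|`, it gives `|p'| + |D₀ p| ≤ n max |p|`.
* If `z^(μ-1)` divides `φ'`, the maximum modulus principle for `φ' / (z^(μ-1) D₀ φ)` upgrades the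
  factor `k` to `k^μ`; applied to `φ - λ`, `|λ| < min_{|w|=k} |φ|`, this gives
  `k^μ |φ'| + (n - s) min_{|w|=k} |φ| ≤ |D₀ φ|`.
Since `D₀ p = z^s D₀ φ` and `|p'| ≤ s |p| + |φ'|` on the circle, eliminating `|φ'|` between the two
estimates bounds `|D_α p| ≤ |α| |p'| + |D₀ p|`.
-/

open Polynomial Metric

noncomputable def polyMaxOn (p : Polynomial ℂ) (r : ℝ) : ℝ :=
  sSup ((fun z => ‖p.eval z‖) '' sphere (0 : ℂ) r)

noncomputable def polyMinOn (p : Polynomial ℂ) (r : ℝ) : ℝ :=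
  sInf ((fun z => ‖p.eval z‖) '' sphere (0 : ℂ) r)

open Filter Topology

noncomputable def polarDeriv (n : ℕ) (α : ℂ) (p : ℂ[X]) : ℂ[X] :=
  C (n : ℂ) * p + (C α - X) * derivative p

@[simp]
theorem eval_polarDeriv (n : ℕ) (α : ℂ) (p : ℂ[X]) (z : ℂ) :
    (polarDeriv n α p).eval z = n * p.eval z + (α - z) * (derivative p).eval z := by
  simp [polarDeriv]

theorem polarDeriv_eq_C_mul_derivative_add (n : ℕ) (α : ℂ) (p : ℂ[X]) :
    polarDeriv n α p = C α * derivative p + polarDeriv n 0 p := by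
  simp only [polarDeriv, C_0]
  ring

theorem polarDeriv_sub_C (n : ℕ) (p : ℂ[X]) (c : ℂ) :
    polarDeriv n 0 (p - C c) = polarDeriv n 0 p - C (n * c) := by
  simp only [polarDeriv, derivative_sub, derivative_C, sub_zero, C_mul]
  ring

theorem X_mul_derivative_X_pow_mul (s : ℕ) (φ : ℂ[X]) :
    X * derivative (X ^ s * φ) = C (s : ℂ) * (X ^ s * φ) + X ^ (s + 1) * derivative φ := by
  rcases s with _ | s
  · simp
  · simp only [derivative_mul, derivative_X_pow, Nat.add_sub_cancel]
    ring

theorem polarDeriv_X_pow_mul {n s : ℕ} (hs : s ≤ n) (φ : ℂ[X]) :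
    polarDeriv n 0 (X ^ s * φ) = X ^ s * polarDeriv (n - s) 0 φ := by
  have h := X_mul_derivative_X_pow_mul s φ
  simp only [polarDeriv, C_0, zero_sub, neg_mul, Nat.cast_sub hs, C_sub] at h ⊢
  linear_combination (-1 : ℂ[X]) * h

theorem X_pow_dvd_derivative_of_coeff_eq_zero {φ : ℂ[X]} {μ : ℕ}
    (h : ∀ v : ℕ, 1 ≤ v → v < μ → φ.coeff v = 0) : X ^ (μ - 1) ∣ derivative φ := by
  refine X_pow_dvd_iff.2 fun d hd => ?_
  rw [coeff_derivative, h (d + 1) (by omega) (by omega), zero_mul]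

theorem exists_norm_eq_one_forall_norm_sub_ofReal_mul (D : ℂ) :
    ∃ u : ℂ, ‖u‖ = 1 ∧ ∀ t : ℝ, ‖D - t * u‖ = |‖D‖ - t| := by
  refine ⟨Complex.exp (D.arg * Complex.I), Complex.norm_exp_ofReal_mul_I _, fun t => ?_⟩
  calc ‖D - t * Complex.exp (D.arg * Complex.I)‖
      = ‖((‖D‖ - t : ℝ) : ℂ) * Complex.exp (D.arg * Complex.I)‖ := by
        rw [Complex.ofReal_sub, sub_mul, Complex.norm_mul_exp_arg_mul_I]
    _ = |‖D‖ - t| := by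
        rw [norm_mul, Complex.norm_exp_ofReal_mul_I, mul_one, Complex.norm_real, Real.norm_eq_abs]

theorem add_le_norm_of_forall_norm_lt {D : ℂ} {A r : ℝ} (hA : 0 < A) (hr : 0 < r)
    (h : ∀ c : ℂ, ‖c‖ < r → A ≤ ‖D - c‖) : A + r ≤ ‖D‖ := by
  obtain ⟨u, hu, hDu⟩ := exists_norm_eq_one_forall_norm_sub_ofReal_mul D
  have hrD : r ≤ ‖D‖ := by
    by_contra! hlt
    simpa using (h D hlt).trans_lt' hA
  have hle : ∀ t : ℝ, 0 ≤ t → t < r → A + t ≤ ‖D‖ := by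
    intro t ht0 htr
    have := h (t * u) (by rwa [norm_mul, hu, mul_one, Complex.norm_real, Real.norm_of_nonneg ht0])
    rw [hDu, abs_of_nonneg (by linarith)] at this
    linarith
  suffices r ≤ ‖D‖ - A by linarith
  refine le_of_forall_lt_imp_le_of_dense fun t ht => ?_
  linarith [hle (max t 0) (le_max_right t 0) (max_lt ht hr), le_max_left t 0]

theorem add_norm_le_of_forall_lt_norm {D : ℂ} {A R : ℝ} (hA : 0 < A)
    (h : ∀ c : ℂ, R < ‖c‖ → A ≤ ‖D - c‖) : A + ‖D‖ ≤ R := by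
  obtain ⟨u, hu, hDu⟩ := exists_norm_eq_one_forall_norm_sub_ofReal_mul D
  have hDR : ‖D‖ ≤ R := by
    by_contra! hlt
    simpa using (h D hlt).trans_lt' hA
  refine le_of_forall_gt_imp_ge_of_dense fun t ht => ?_
  have ht0 : 0 ≤ t := (norm_nonneg D).trans (hDR.trans ht.le)
  have := h (t * u) (by rwa [norm_mul, hu, mul_one, Complex.norm_real, Real.norm_of_nonneg ht0])
  rw [hDu, abs_of_nonpos (by linarith)] at this
  linarith

theorem norm_le_of_forall_mem_sphere_norm_le {f : ℂ → ℂ} {R C : ℝ} (hR : 0 < R)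
    (hf : DifferentiableOn ℂ f (closedBall 0 R)) (hC : ∀ w ∈ sphere (0 : ℂ) R, ‖f w‖ ≤ C)
    {z : ℂ} (hz : ‖z‖ ≤ R) : ‖f z‖ ≤ C := by
  refine Complex.norm_le_of_forall_mem_frontier_norm_le isBounded_ball
    (hf.diffContOnCl_ball subset_rfl) (by rwa [frontier_ball _ hR.ne']) ?_
  rwa [closure_ball _ hR.ne', mem_closedBall_zero_iff]

theorem norm_eval_le_polyMaxOn (p : ℂ[X]) {r : ℝ} (hr : 0 < r) {z : ℂ} (hz : ‖z‖ ≤ r) :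
    ‖p.eval z‖ ≤ polyMaxOn p r := by
  have hbdd : BddAbove ((fun w => ‖p.eval w‖) '' sphere (0 : ℂ) r) :=
    (isCompact_sphere 0 r).bddAbove_image (by fun_prop)
  exact norm_le_of_forall_mem_sphere_norm_le hr p.differentiable.differentiableOn
    (fun w hw => le_csSup hbdd ⟨w, hw, rfl⟩) hz

theorem polyMinOn_nonneg (p : ℂ[X]) (r : ℝ) : 0 ≤ polyMinOn p r :=
  Real.sInf_nonneg (by rintro _ ⟨w, -, rfl⟩; exact norm_nonneg _)

theorem polyMinOn_le_norm_eval_of_mem_sphere (p : ℂ[X]) {r : ℝ} {w : ℂ}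
    (hw : w ∈ sphere (0 : ℂ) r) : polyMinOn p r ≤ ‖p.eval w‖ :=
  csInf_le ⟨0, by rintro _ ⟨v, -, rfl⟩; exact norm_nonneg _⟩ ⟨w, hw, rfl⟩

theorem polyMinOn_le_norm_eval {φ : ℂ[X]} {k : ℝ} (hk : 0 < k)
    (hφ : ∀ w : ℂ, φ.eval w = 0 → k ≤ ‖w‖) {z : ℂ} (hz : ‖z‖ ≤ k) :
    polyMinOn φ k ≤ ‖φ.eval z‖ := by
  set m := polyMinOn φ k
  rcases (polyMinOn_nonneg φ k).eq_or_lt with hm | hm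
  · exact hm.symm.trans_le (norm_nonneg _)
  have hsphere : ∀ w ∈ sphere (0 : ℂ) k, m ≤ ‖φ.eval w‖ :=
    fun w hw => polyMinOn_le_norm_eval_of_mem_sphere φ hw
  have hne : ∀ w ∈ closedBall (0 : ℂ) k, φ.eval w ≠ 0 := by
    intro w hw h0
    have hwk : ‖w‖ = k := le_antisymm (mem_closedBall_zero_iff.1 hw) (hφ w h0)
    have := hsphere w (mem_sphere_zero_iff_norm.2 hwk)
    rw [h0, norm_zero] at this
    exact hm.not_ge this
  have hinv := norm_le_of_forall_mem_sphere_norm_le (f := fun w => (φ.eval w)⁻¹) hk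
    (φ.differentiable.differentiableOn.inv hne)
    (fun w hw => by rw [norm_inv]; exact inv_anti₀ hm (hsphere w hw)) hz
  rw [norm_inv] at hinv
  exact (inv_le_inv₀ (norm_pos_iff.2 (hne z (mem_closedBall_zero_iff.2 hz))) hm).1 hinv

theorem polyMinOn_X_pow_mul_le (s : ℕ) (φ : ℂ[X]) {r : ℝ} (hr : 0 < r) :
    polyMinOn (X ^ s * φ) r ≤ r ^ s * polyMinOn φ r := by
  rw [← div_le_iff₀' (by positivity)]
  refine le_csInf ((NormedSpace.sphere_nonempty.2 hr.le).image _) ?_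
  rintro _ ⟨w, hw, rfl⟩
  rw [div_le_iff₀' (by positivity)]
  have := polyMinOn_le_norm_eval_of_mem_sphere (X ^ s * φ) hw
  rwa [eval_mul, eval_pow, eval_X, norm_mul, norm_pow, mem_sphere_zero_iff_norm.1 hw] at this

theorem Convex.exists_mem_multiset_sum_eq_smul {𝕜 E : Type*} [Field 𝕜] [LinearOrder 𝕜]
    [IsStrictOrderedRing 𝕜] [AddCommGroup E] [Module 𝕜 E] {U : Set E} (hU : Convex 𝕜 U)
    (h0 : (0 : E) ∈ U) {S : Multiset E} (hS : ∀ x ∈ S, x ∈ U) {N : ℕ}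
    (hN : Multiset.card S ≤ N) : ∃ u ∈ U, S.sum = (N : 𝕜) • u := by
  induction S using Multiset.induction generalizing N with
  | empty => exact ⟨0, h0, by simp⟩
  | cons a S ih =>
    obtain ⟨N, rfl⟩ : ∃ N', N = N' + 1 := ⟨N - 1, by simp at hN; omega⟩
    obtain ⟨v, hv, hSv⟩ := ih (fun x hx => hS x (Multiset.mem_cons_of_mem hx))
      (by simpa using hN)
    obtain ⟨u, hu, hau⟩ := hU.exists_mem_add_smul_eq (hS a (Multiset.mem_cons_self a S)) hv
      zero_le_one (Nat.cast_nonneg N)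
    refine ⟨u, hu, ?_⟩
    rw [Multiset.sum_cons, hSv, Nat.cast_succ, add_comm (N : 𝕜), hau, one_smul]

theorem norm_one_sub_mul_sq (z u : ℂ) :
    ‖1 - z * u‖ ^ 2 = 1 - 2 * (z * u).re + ‖z‖ ^ 2 * ‖u‖ ^ 2 := by
  rw [Complex.sq_norm, Complex.sq_norm, Complex.sq_norm, Complex.normSq_sub, Complex.normSq_mul]
  simp only [map_one, one_mul, Complex.conj_re, Complex.mul_re]
  ring

theorem convex_setOf_mul_norm_le_norm_one_sub_mul {z : ℂ} {k : ℝ} (hz : ‖z‖ ≤ k) :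
    Convex ℝ {u : ℂ | k * ‖u‖ ≤ ‖1 - z * u‖} := by
  have hk : 0 ≤ k := (norm_nonneg z).trans hz
  have hconv : ConvexOn ℝ Set.univ
      (fun u : ℂ => (k ^ 2 - ‖z‖ ^ 2) * ‖u‖ ^ 2 + 2 * (z * u).re) := by
    refine (((convexOn_norm convex_univ).pow (fun _ _ => norm_nonneg _) 2).smul
      (by nlinarith [norm_nonneg z])).add ?_
    exact ((2 : ℝ) • (Complex.reLm.comp (LinearMap.mulLeft ℝ z))).convexOn convex_univ
  convert hconv.convex_le 1 using 1
  ext u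
  simp only [Set.mem_ofPred_eq, Set.mem_univ, true_and]
  rw [← pow_le_pow_iff_left₀ (by positivity) (norm_nonneg _) two_ne_zero, norm_one_sub_mul_sq]
  constructor <;> intro h <;> nlinarith

theorem mul_norm_multiset_sum_le {S : Multiset ℂ} {N : ℕ} {z : ℂ} {k : ℝ} (hz : ‖z‖ ≤ k)
    (hN : Multiset.card S ≤ N) (hS : ∀ u ∈ S, k * ‖u‖ ≤ ‖1 - z * u‖) :
    k * ‖S.sum‖ ≤ ‖N - z * S.sum‖ := by
  obtain ⟨u, hu, hSu⟩ :=
    (convex_setOf_mul_norm_le_norm_one_sub_mul hz).exists_mem_multiset_sum_eq_smul (by simp) hS hN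
  have hNu : (N : ℂ) - z * S.sum = N * (1 - z * u) := by
    rw [hSu, Complex.real_smul, Complex.ofReal_natCast]
    ring
  rw [hNu, hSu, norm_mul, norm_smul, Complex.norm_natCast, Real.norm_natCast, mul_left_comm]
  exact mul_le_mul_of_nonneg_left hu (Nat.cast_nonneg N)

section Laguerre

variable {φ : ℂ[X]} {N m : ℕ} {k : ℝ} {z : ℂ}

theorem mul_norm_eval_derivative_le_norm_eval_polarDeriv (hN : φ.natDegree ≤ N)
    (hφ : ∀ w : ℂ, φ.eval w = 0 → k ≤ ‖w‖) (hz : ‖z‖ ≤ k) :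
    k * ‖(derivative φ).eval z‖ ≤ ‖(polarDeriv N 0 φ).eval z‖ := by
  by_cases hφz : φ.eval z = 0
  · have hzk : ‖z‖ = k := le_antisymm hz (hφ z hφz)
    simp [hφz, hzk]
  set S := φ.roots.map fun w => 1 / (z - w)
  have hφ' : (derivative φ).eval z = φ.eval z * S.sum :=
    (IsAlgClosed.splits φ).eval_derivative_eq_eval_mul_sum hφz
  have hD : (polarDeriv N 0 φ).eval z = φ.eval z * (N - z * S.sum) := by
    rw [eval_polarDeriv, hφ']
    ring
  have hS : ∀ u ∈ S, k * ‖u‖ ≤ ‖1 - z * u‖ := by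
    simp only [S, Multiset.mem_map, forall_exists_index, and_imp]
    rintro _ w hw rfl
    have hw0 : φ.eval w = 0 := isRoot_of_mem_roots hw
    have hzw : z - w ≠ 0 := sub_ne_zero.2 fun h => hφz (h ▸ hw0)
    have : 1 - z * (1 / (z - w)) = -w / (z - w) := by field_simp; ring
    rw [this, norm_div, norm_div, norm_neg, norm_one, mul_one_div]
    exact div_le_div_of_nonneg_right (hφ w hw0) (norm_nonneg _)
  have hcard : Multiset.card S ≤ N := (Multiset.card_map _ _).trans_le ((card_roots' φ).trans hN)
  rw [hφ', hD, norm_mul, norm_mul, mul_left_comm]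
  exact mul_le_mul_of_nonneg_left (mul_norm_multiset_sum_le hz hcard hS) (norm_nonneg _)

theorem eval_polarDeriv_ne_zero (hN : φ.natDegree ≤ N) (hφ' : derivative φ ≠ 0)
    (hφ : ∀ w : ℂ, φ.eval w = 0 → k ≤ ‖w‖) (hz : ‖z‖ < k) :
    (polarDeriv N 0 φ).eval z ≠ 0 := by
  intro hD
  have hk : 0 < k := (norm_nonneg z).trans_lt hz
  have hd : (derivative φ).eval z = 0 := by
    have := mul_norm_eval_derivative_le_norm_eval_polarDeriv hN hφ hz.le
    rw [hD, norm_zero] at this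
    exact norm_le_zero_iff.1 (nonpos_of_mul_nonpos_right this hk)
  have hN0 : (N : ℂ) ≠ 0 := by
    rintro hN0
    exact hφ' (derivative_of_natDegree_zero (Nat.le_zero.1 (Nat.cast_eq_zero.1 hN0 ▸ hN)))
  rw [eval_polarDeriv, hd, mul_zero, add_zero, mul_eq_zero] at hD
  exact (hφ z (hD.resolve_left hN0)).not_gt hz

theorem mul_pow_norm_eval_le_of_derivative_eq_X_pow_mul {B : ℂ[X]} {R : ℝ}
    (hN : φ.natDegree ≤ N) (hφ' : derivative φ ≠ 0) (hB : derivative φ = X ^ m * B)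
    (hφ : ∀ w : ℂ, φ.eval w = 0 → k ≤ ‖w‖) (hR : 0 < R) (hRk : R < k) (hz : ‖z‖ ≤ R) :
    k * R ^ m * ‖B.eval z‖ ≤ ‖(polarDeriv N 0 φ).eval z‖ := by
  set D := polarDeriv N 0 φ
  have hkR : 0 < k * R ^ m := by have := hR.trans hRk; positivity
  have hD : ∀ w ∈ closedBall (0 : ℂ) R, D.eval w ≠ 0 := fun w hw =>
    eval_polarDeriv_ne_zero hN hφ' hφ ((mem_closedBall_zero_iff.1 hw).trans_lt hRk)
  have hsphere : ∀ w ∈ sphere (0 : ℂ) R, ‖B.eval w / D.eval w‖ ≤ (k * R ^ m)⁻¹ := by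
    intro w hw
    have hwR := mem_sphere_zero_iff_norm.1 hw
    have := mul_norm_eval_derivative_le_norm_eval_polarDeriv hN hφ (hwR.trans_le hRk.le)
    rw [hB, eval_mul, eval_pow, eval_X, norm_mul, norm_pow, hwR, ← mul_assoc] at this
    rw [norm_div, div_le_iff₀ (norm_pos_iff.2 (hD w (sphere_subset_closedBall hw))),
      inv_mul_eq_div, le_div_iff₀' hkR]
    exact this
  have := norm_le_of_forall_mem_sphere_norm_le hR
    (B.differentiable.differentiableOn.div D.differentiable.differentiableOn hD) hsphere hz
  rwa [Pi.div_apply, norm_div, div_le_iff₀ (norm_pos_iff.2 (hD z (mem_closedBall_zero_iff.2 hz))),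
    inv_mul_eq_div, le_div_iff₀' hkR] at this

theorem pow_succ_mul_norm_eval_derivative_le (hk : 1 ≤ k) (hN : φ.natDegree ≤ N)
    (hgap : X ^ m ∣ derivative φ) (hφ : ∀ w : ℂ, φ.eval w = 0 → k ≤ ‖w‖) (hz : ‖z‖ ≤ 1) :
    k ^ (m + 1) * ‖(derivative φ).eval z‖ ≤ ‖(polarDeriv N 0 φ).eval z‖ := by
  rcases hk.eq_or_lt with rfl | hk1
  · simpa using mul_norm_eval_derivative_le_norm_eval_polarDeriv hN hφ hz
  by_cases hφ' : derivative φ = 0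
  · simp only [hφ', eval_zero, norm_zero, mul_zero]
    exact norm_nonneg _
  obtain ⟨B, hB⟩ := hgap
  have hφB : ‖(derivative φ).eval z‖ ≤ ‖B.eval z‖ := by
    rw [hB, eval_mul, eval_pow, eval_X, norm_mul, norm_pow]
    exact mul_le_of_le_one_left (norm_nonneg _) (pow_le_one₀ (norm_nonneg _) hz)
  -- `polarDeriv N 0 φ` may vanish on `‖w‖ = k`, hence the circles of radius `R < k` and `R → k`
  have hkB : k * k ^ m * ‖B.eval z‖ ≤ ‖(polarDeriv N 0 φ).eval z‖ := by
    have hlim : Tendsto (fun R => k * R ^ m * ‖B.eval z‖) (𝓝[<] k)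
        (𝓝 (k * k ^ m * ‖B.eval z‖)) :=
      (Continuous.tendsto (by fun_prop) k).mono_left nhdsWithin_le_nhds
    refine le_of_tendsto hlim ?_
    filter_upwards [Ioo_mem_nhdsLT hk1] with R hR
    exact mul_pow_norm_eval_le_of_derivative_eq_X_pow_mul hN hφ' hB hφ (zero_lt_one.trans hR.1)
      hR.2 (hz.trans hR.1.le)
  calc k ^ (m + 1) * ‖(derivative φ).eval z‖ ≤ k * k ^ m * ‖B.eval z‖ := by
        rw [pow_succ']
        gcongr
    _ ≤ _ := hkB

theorem pow_succ_mul_norm_eval_derivative_add_le (hk : 1 ≤ k) (hN : φ.natDegree ≤ N)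
    (hgap : X ^ m ∣ derivative φ) (hφ : ∀ w : ℂ, φ.eval w = 0 → k ≤ ‖w‖) (hz : ‖z‖ ≤ 1) :
    k ^ (m + 1) * ‖(derivative φ).eval z‖ + N * polyMinOn φ k ≤
      ‖(polarDeriv N 0 φ).eval z‖ := by
  have hmin := fun w => polyMinOn_le_norm_eval (zero_lt_one.trans_le hk) hφ (z := w)
  by_cases hd : (derivative φ).eval z = 0
  · rw [eval_polarDeriv, hd, mul_zero, add_zero, norm_zero, mul_zero, zero_add, norm_mul,
      Complex.norm_natCast]
    gcongr
    exact hmin z (hz.trans hk)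
  rcases (mul_nonneg (Nat.cast_nonneg N) (polyMinOn_nonneg φ k)).eq_or_lt with h0 | hpos
  · rw [← h0, add_zero]
    exact pow_succ_mul_norm_eval_derivative_le hk hN hgap hφ hz
  refine add_le_norm_of_forall_norm_lt (mul_pos (by positivity) (norm_pos_iff.2 hd)) hpos
    fun c hc => ?_
  have hNpos : (0 : ℝ) < N := pos_of_mul_pos_left hpos (polyMinOn_nonneg φ k)
  have hroots : ∀ w, (φ - C (c / N)).eval w = 0 → k ≤ ‖w‖ := by
    intro w hw
    by_contra! hwk
    rw [eval_sub, eval_C, sub_eq_zero] at hw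
    have := hmin w hwk.le
    rw [hw, norm_div, Complex.norm_natCast, le_div_iff₀ hNpos] at this
    linarith
  have hder : derivative (φ - C (c / N)) = derivative φ := by
    rw [derivative_sub, derivative_C, sub_zero]
  have := pow_succ_mul_norm_eval_derivative_le hk (natDegree_sub_C.trans_le hN) (hder ▸ hgap)
    hroots hz
  rwa [hder, polarDeriv_sub_C, eval_sub, eval_C, mul_div_cancel₀ _ (by exact_mod_cast hNpos.ne')]
    at this

end Laguerre

theorem norm_eval_derivative_add_le {p : ℂ[X]} {n : ℕ} {z : ℂ} (hn : p.natDegree ≤ n)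
    (hz : ‖z‖ ≤ 1) :
    ‖(derivative p).eval z‖ + ‖(polarDeriv n 0 p).eval z‖ ≤ n * polyMaxOn p 1 := by
  have hmax := fun w => norm_eval_le_polyMaxOn p one_pos (z := w)
  by_cases hd : (derivative p).eval z = 0
  · simp only [hd, norm_zero, mul_zero, add_zero, zero_add, eval_polarDeriv, norm_mul,
      Complex.norm_natCast]
    gcongr
    exact hmax z hz
  have hn0 : (n : ℂ) ≠ 0 := by
    rintro hn0
    exact hd (by rw [derivative_of_natDegree_zero (Nat.le_zero.1 (Nat.cast_eq_zero.1 hn0 ▸ hn)),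
      eval_zero])
  have hnpos : (0 : ℝ) < n := by norm_cast at hn0 ⊢; omega
  refine add_norm_le_of_forall_lt_norm (norm_pos_iff.2 hd) fun c hc => ?_
  have hroots : ∀ w, (p - C (c / n)).eval w = 0 → 1 ≤ ‖w‖ := by
    intro w hw
    by_contra! hw1
    rw [eval_sub, eval_C, sub_eq_zero] at hw
    have := hmax w hw1.le
    rw [hw, norm_div, Complex.norm_natCast, div_le_iff₀ hnpos] at this
    linarith
  have := mul_norm_eval_derivative_le_norm_eval_polarDeriv (natDegree_sub_C.trans_le hn)
    hroots hz
  rwa [one_mul, derivative_sub, derivative_C, sub_zero, polarDeriv_sub_C, eval_sub, eval_C,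
    mul_div_cancel₀ _ hn0] at this

theorem norm_eval_derivative_X_pow_mul_le (s : ℕ) (φ : ℂ[X]) {z : ℂ} (hz : ‖z‖ = 1) :
    ‖(derivative (X ^ s * φ)).eval z‖ ≤
      s * ‖(X ^ s * φ).eval z‖ + ‖(derivative φ).eval z‖ := by
  have h := congrArg (eval z) (X_mul_derivative_X_pow_mul s φ)
  simp only [eval_mul, eval_X, eval_C, eval_add, eval_pow] at h
  calc ‖(derivative (X ^ s * φ)).eval z‖ = ‖z * (derivative (X ^ s * φ)).eval z‖ := by
        rw [norm_mul, hz, one_mul]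
    _ ≤ _ := by
        rw [h, eval_mul, eval_pow, eval_X]
        refine (norm_add_le _ _).trans_eq ?_
        simp only [norm_mul, norm_pow, hz, one_pow, one_mul, Complex.norm_natCast]

theorem norm_eval_polarDeriv_X_pow_mul {n s : ℕ} (hs : s ≤ n) (φ : ℂ[X]) {z : ℂ}
    (hz : ‖z‖ = 1) :
    ‖(polarDeriv n 0 (X ^ s * φ)).eval z‖ = ‖(polarDeriv (n - s) 0 φ).eval z‖ := by
  rw [polarDeriv_X_pow_mul hs, eval_mul, eval_pow, eval_X, norm_mul, norm_pow, hz, one_pow,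
    one_mul]

theorem norm_eval_polarDeriv_X_pow_mul_le {n s m : ℕ} {k : ℝ} {α z : ℂ} {φ : ℂ[X]}
    (hk : 1 ≤ k) (hα : 1 ≤ ‖α‖) (hs : s ≤ n) (hφdeg : φ.natDegree ≤ n - s)
    (hgap : X ^ m ∣ derivative φ) (hφ : ∀ w : ℂ, φ.eval w = 0 → k ≤ ‖w‖) (hz : ‖z‖ = 1) :
    ‖(polarDeriv n α (X ^ s * φ)).eval z‖ ≤
      (‖α‖ * ((n : ℝ) + s * k ^ (m + 1)) + ((n : ℝ) - s) * k ^ (m + 1)) / (1 + k ^ (m + 1)) *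
          polyMaxOn (X ^ s * φ) 1 -
        (‖α‖ - 1) * ((n : ℝ) - s) / (k ^ s * (1 + k ^ (m + 1))) * polyMinOn (X ^ s * φ) k := by
  set p := X ^ s * φ
  set K := k ^ (m + 1)
  set M := polyMaxOn p 1
  set a := ‖(derivative p).eval z‖
  set b := ‖(polarDeriv n 0 p).eval z‖
  have hK : 0 < K := by positivity
  have hpdeg : p.natDegree ≤ n := natDegree_mul_le.trans (by rw [natDegree_X_pow]; omega)
  have hab : a + b ≤ n * M := norm_eval_derivative_add_le hpdeg hz.le
  have hb : K * ‖(derivative φ).eval z‖ + (n - s) * polyMinOn φ k ≤ b := by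
    rw [show b = _ from norm_eval_polarDeriv_X_pow_mul hs φ hz, ← Nat.cast_sub hs]
    exact pow_succ_mul_norm_eval_derivative_add_le hk hφdeg hgap hφ hz.le
  have ha : a ≤ s * M + ‖(derivative φ).eval z‖ := by
    refine (norm_eval_derivative_X_pow_mul_le s φ hz).trans ?_
    gcongr
    exact norm_eval_le_polyMaxOn p one_pos hz.le
  have hmin : (n - s) * (polyMinOn p k / k ^ s) ≤ (n - s) * polyMinOn φ k :=
    mul_le_mul_of_nonneg_left ((div_le_iff₀' (by positivity)).2
      (polyMinOn_X_pow_mul_le s φ (by linarith))) (sub_nonneg.2 (by exact_mod_cast hs))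
  have ha' : (1 + K) * a ≤ (n + s * K) * M - (n - s) * (polyMinOn p k / k ^ s) := by
    nlinarith [mul_le_mul_of_nonneg_left ha hK.le]
  calc ‖(polarDeriv n α p).eval z‖ ≤ ‖α‖ * a + b := by
        rw [polarDeriv_eq_C_mul_derivative_add, eval_add, eval_mul, eval_C, ← norm_mul]
        exact norm_add_le _ _
    _ = (a + b) + (‖α‖ - 1) * a := by ring
    _ ≤ n * M + (‖α‖ - 1) * (((n + s * K) * M - (n - s) * (polyMinOn p k / k ^ s)) / (1 + K)) :=
      add_le_add hab (mul_le_mul_of_nonneg_left ((le_div_iff₀' (by positivity)).2 ha')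
        (by linarith))
    _ = _ := by
      field_simp
      ring

theorem polar_upper_corollary5_general (n s μ : ℕ) (k : ℝ) (hk : 1 ≤ k)
    (α : ℂ) (hα : 1 ≤ ‖α‖)
    (hμ1 : 1 ≤ μ) (hs : s ≤ n - 1)
    (φ p : Polynomial ℂ) (hφdeg : φ.natDegree = n - s)
    (hcoeff : ∀ v : ℕ, 1 ≤ v → v < μ → φ.coeff v = 0)
    (hφz : ∀ z : ℂ, φ.eval z = 0 → k ≤ ‖z‖)
    (hp : p = X ^ s * φ) :
    sSup ((fun z =>
        ‖(n : ℂ) * p.eval z + (α - z) * (derivative p).eval z‖) ''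
          sphere (0 : ℂ) 1) ≤
      (‖α‖ * ((n : ℝ) + s * k ^ μ) + ((n : ℝ) - s) * k ^ μ) / (1 + k ^ μ) *
          polyMaxOn p 1 -
        (‖α‖ - 1) * ((n : ℝ) - s) / (k ^ s * (1 + k ^ μ)) * polyMinOn p k := by
  have hgap := X_pow_dvd_derivative_of_coeff_eq_zero hcoeff
  obtain ⟨m, rfl⟩ : ∃ m, μ = m + 1 := ⟨μ - 1, by omega⟩
  subst hp
  refine csSup_le ((NormedSpace.sphere_nonempty.2 zero_le_one).image _) ?_
  rintro _ ⟨z, hz, rfl⟩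
  simpa only [eval_polarDeriv] using norm_eval_polarDeriv_X_pow_mul_le hk hα (by omega) hφdeg.le
    (by simpa using hgap) hφz (mem_sphere_zero_iff_norm.1 hz)

theorem polar_upper_corollary5 (n s μ : ℕ) (k : ℝ) (hk : 1 ≤ k)
    (α : ℂ) (hα : 1 ≤ ‖α‖)
    (hμ1 : 1 ≤ μ) (hμ : μ ≤ n - s) (hs : s ≤ n - 1)
    (φ p : Polynomial ℂ) (hφdeg : φ.natDegree = n - s)
    (hcoeff : ∀ v : ℕ, 1 ≤ v → v < μ → φ.coeff v = 0)
    (hφz : ∀ z : ℂ, φ.eval z = 0 → k ≤ ‖z‖)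
    (hp : p = X ^ s * φ) (hpdeg : p.natDegree = n) :
    sSup ((fun z =>
        ‖(n : ℂ) * p.eval z + (α - z) * (derivative p).eval z‖) ''
          sphere (0 : ℂ) 1) ≤
      (‖α‖ * ((n : ℝ) + s * k ^ μ) + ((n : ℝ) - s) * k ^ μ) / (1 + k ^ μ) *
          polyMaxOn p 1 -
        (‖α‖ - 1) * ((n : ℝ) - s) / (k ^ s * (1 + k ^ μ)) * polyMinOn p k :=
  polar_upper_corollary5_general n s μ k hk α hα hμ1 hs φ p hφdeg hcoeff hφz hp
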